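/- arXiv:1210.2165 — 2 statements merged into one kernel-verified Lean document; each statement's English description precedes it below -/
import Mathlib

section
/- Let α ≥ 0 and N ∈ ℕ, and let v_k : ℝ → ℂ³ (k ∈ Γ_N) be differentiable functions satisfying, for all t ∈ ℝ and all k ∈ Γ_N, the Galerkin system dv_k/dt(t) = −i Σ_{h ∈ Γ_N, k−h ∈ Γ_N} (⟨v_h(t),k⟩/(1+α‖h‖²)) P_k(v_{k−h}(t)), together with the constraints ⟨v_k(t),k⟩ = 0 and v_{−k}(t) = conj(v_k(t)) for all t and k ∈ Γ_N. Then the energy t ↦ Σ_{k∈Γ_N} ‖v_k(t)‖² is constant in t. -/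
open scoped BigOperators ComplexConjugate

noncomputable section

/-- The lattice `ℤ³`. -/
abbrev Z3 := Fin 3 → ℤ
/-- `ℂ³` with its Hermitian (Euclidean) norm. -/
abbrev C3 := EuclideanSpace ℂ (Fin 3)
/-- `ℝ³` with its Euclidean norm. -/
abbrev R3 := EuclideanSpace ℝ (Fin 3)

/-- Hermitian inner product `⟨x,y⟩ = ∑_j x_j conj(y_j)` (conjugate-linear in the second slot),
as used in the paper. -/
def hinner (x y : C3) : ℂ := ∑ j, x j * conj (y j)

/-- A lattice vector regarded as an element of `ℂ³`. -/
def latC (k : Z3) : C3 := WithLp.toLp 2 (fun j => (k j : ℂ))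

/-- A lattice vector regarded as an element of `ℝ³`. -/
def latR (k : Z3) : R3 := WithLp.toLp 2 (fun j => (k j : ℝ))

/-- Squared Euclidean norm `‖k‖²` of a lattice vector `k`. -/
def nsq (k : Z3) : ℝ := ∑ j, ((k j : ℝ))^2

/-- Euclidean norm `‖k‖` of a lattice vector `k`. -/
def znorm (k : Z3) : ℝ := Real.sqrt (nsq k)

/-- Orthogonal projection of `ℂ³` onto the orthogonal complement of the lattice vector `k`:
`P_k(v) = v - (⟨v,k⟩/⟨k,k⟩) k`. -/
def Pk (k : Z3) (v : C3) : C3 := v - (hinner v (latC k) / hinner (latC k) (latC k)) • latC k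

/-- Componentwise complex conjugation on `ℂ³`. -/
def conjC3 (x : C3) : C3 := WithLp.toLp 2 (fun j => conj (x j))

/-- Orthogonal projection of `ℝ³` onto the orthogonal complement of the lattice vector `h`. -/
def PkR (h : Z3) (v : R3) : R3 := v - ((∑ j, v j * (h j : ℝ)) / nsq h) • latR h

/-- `‖P_h(k)‖`: the Euclidean norm of the projection of the lattice vector `k`
onto the orthogonal complement of the lattice vector `h`. -/
def projNorm (h k : Z3) : ℝ := ‖PkR h (latR k)‖

/-- The set `Γ_N = {k ∈ ℤ³ : 0 < ‖k‖ < N}` of active Fourier modes of the Galerkin system,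
realized as a `Finset` (note that `0 < ‖k‖ ↔ k ≠ 0` and `‖k‖ < N ↔ ∑_j k_j² < N²`). -/
def GammaN (N : ℕ) : Finset Z3 :=
  (Finset.Icc (fun _ => -(N:ℤ)) (fun _ => (N:ℤ))).filter
    (fun k => k ≠ 0 ∧ (∑ j, (k j)^2) < (N:ℤ)^2)

def ddot (x y : C3) : ℂ := ∑ j, x j * y j

lemma ddot_comm (x y : C3) : ddot x y = ddot y x := by
  simp [ddot, mul_comm]

lemma hinner_eq_ddot (x y : C3) : hinner x y = ddot x (conjC3 y) := by simp [hinner, ddot, conjC3]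

lemma conjC3_latC (k : Z3) : conjC3 (latC k) = latC k := by
  ext j; simp [conjC3, latC]

lemma hinner_conj (x y : C3) : hinner y x = conj (hinner x y) := by
  simp [hinner, map_sum, mul_comm]

lemma hinner_smul_left (a : ℂ) (x y : C3) : hinner (a • x) y = a * hinner x y := by
  simp [hinner, PiLp.smul_apply, smul_eq_mul, Finset.mul_sum, mul_assoc]

lemma hinner_sub_left (x z y : C3) : hinner (x - z) y = hinner x y - hinner z y := by
  simp [hinner, PiLp.sub_apply, sub_mul, Finset.sum_sub_distrib]

lemma hinner_sum_left {ι : Type*} (s : Finset ι) (f : ι → C3) (y : C3) :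
    hinner (∑ i ∈ s, f i) y = ∑ i ∈ s, hinner (f i) y := by
  simp only [hinner]
  rw [Finset.sum_comm]
  refine Finset.sum_congr rfl fun j _ => ?_
  rw [WithLp.ofLp_sum, Finset.sum_apply, Finset.sum_mul]

lemma ddot_latC_sub (x : C3) (a b : Z3) :
    ddot x (latC (a - b)) = ddot x (latC a) - ddot x (latC b) := by
  simp [ddot, latC, Pi.sub_apply, mul_sub, Finset.sum_sub_distrib]

lemma neg_mem_GammaN {N : ℕ} {k : Z3} (h : k ∈ GammaN N) : -k ∈ GammaN N := by
  simp only [GammaN, Finset.mem_filter, Finset.mem_Icc] at h ⊢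
  obtain ⟨⟨h1, h2⟩, h3, h4⟩ := h
  refine ⟨⟨fun i => ?_, fun i => ?_⟩, neg_ne_zero.mpr h3, ?_⟩
  · simpa using neg_le_neg (h2 i)
  · simpa using neg_le_neg (h1 i)
  · simpa [neg_sq] using h4
def Dfun (α : ℝ) (N : ℕ) (v : Z3 → ℝ → C3) (k : Z3) (t : ℝ) : C3 :=
  (-Complex.I) • ∑ h ∈ (GammaN N).filter (fun h => k - h ∈ GammaN N),
    (hinner (v h t) (latC k) / ((1 + α * nsq h : ℝ) : ℂ)) • Pk k (v (k - h) t)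

lemma key_sum (α : ℝ) (N : ℕ) (v : Z3 → ℝ → C3) (τ : ℝ)
    (hinc : ∀ k ∈ GammaN N, hinner (v k τ) (latC k) = 0)
    (hreal : ∀ k ∈ GammaN N, v (-k) τ = conjC3 (v k τ)) :
    ∑ k ∈ GammaN N, hinner (Dfun α N v k τ) (v k τ) = 0 := by
  set Γ := GammaN N with hΓ
  set F : Z3 × Z3 → ℂ := fun p =>
    (-Complex.I) * ((ddot (v p.2 τ) (latC p.1) / ((1 + α * nsq p.2 : ℝ) : ℂ)) *
      ddot (v (p.1 - p.2) τ) (v (-p.1) τ)) with hF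
  have stepA : ∀ k ∈ Γ, hinner (Dfun α N v k τ) (v k τ)
      = ∑ h ∈ Γ.filter (fun h => k - h ∈ Γ), F (k, h) := by
    intro k hk
    have hlk : hinner (latC k) (v k τ) = 0 := by
      rw [hinner_conj, hinc k hk, map_zero]
    rw [Dfun, hinner_smul_left, hinner_sum_left, Finset.mul_sum]
    refine Finset.sum_congr rfl fun h hh => ?_
    rw [hinner_smul_left, Pk, hinner_sub_left, hinner_smul_left, hlk, mul_zero, sub_zero]
    have h1 : hinner (v h τ) (latC k) = ddot (v h τ) (latC k) := by
      rw [hinner_eq_ddot, conjC3_latC]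
    have h2 : hinner (v (k - h) τ) (v k τ) = ddot (v (k - h) τ) (v (-k) τ) := by
      rw [hinner_eq_ddot, hreal k hk]
    rw [h1, h2]
  have prodeq :
      ∑ k ∈ Γ, ∑ h ∈ Γ.filter (fun h => k - h ∈ Γ), F (k, h)
        = ∑ p ∈ (Γ ×ˢ Γ).filter (fun p => p.1 - p.2 ∈ Γ), F p := by
    simp only [Finset.sum_filter]
    rw [Finset.sum_product]
  rw [Finset.sum_congr rfl stepA, prodeq]
  set P := (Γ ×ˢ Γ).filter (fun p : Z3 × Z3 => p.1 - p.2 ∈ Γ) with hP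
  have memP : ∀ p : Z3 × Z3, p ∈ P ↔ (p.1 ∈ Γ ∧ p.2 ∈ Γ) ∧ p.1 - p.2 ∈ Γ := by
    intro p; simp [hP, Finset.mem_filter, Finset.mem_product]
  have hinvol : ∑ p ∈ P, F p = ∑ p ∈ P, -F p := by
    refine Finset.sum_nbij' (fun p => (p.2 - p.1, p.2)) (fun p => (p.2 - p.1, p.2))
      ?_ ?_ ?_ ?_ ?_
    · intro p hp
      rw [memP] at hp ⊢
      obtain ⟨⟨h1, h2⟩, h3⟩ := hp
      refine ⟨⟨?_, h2⟩, ?_⟩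
      · simpa [neg_sub] using neg_mem_GammaN h3
      · simpa [sub_sub_cancel_left] using neg_mem_GammaN h1
    · intro p hp
      rw [memP] at hp ⊢
      obtain ⟨⟨h1, h2⟩, h3⟩ := hp
      refine ⟨⟨?_, h2⟩, ?_⟩
      · simpa [neg_sub] using neg_mem_GammaN h3
      · simpa [sub_sub_cancel_left] using neg_mem_GammaN h1
    · intro p _; simp [sub_sub_cancel]
    · intro p _; simp [sub_sub_cancel]
    · intro p hp
      rw [memP] at hp
      obtain ⟨⟨h1, h2⟩, h3⟩ := hp
      have dh : ddot (v p.2 τ) (latC p.2) = 0 := by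
        have := hinc p.2 h2
        rwa [hinner_eq_ddot, conjC3_latC] at this
      have e1 : ddot (v p.2 τ) (latC (p.2 - p.1)) = - ddot (v p.2 τ) (latC p.1) := by
        rw [ddot_latC_sub, dh, zero_sub]
      have e2 : (p.2 - p.1) - p.2 = -p.1 := by abel
      have e3 : -(p.2 - p.1) = p.1 - p.2 := neg_sub _ _
      simp only [hF]
      simp only [e1, e2, e3]
      rw [ddot_comm (v (-p.1) τ)]
      ring
  have h2 : (∑ p ∈ P, F p) + (∑ p ∈ P, F p) = 0 := by
    nth_rewrite 1 [hinvol]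
    rw [← Finset.sum_add_distrib]
    simp
  have := add_self_eq_zero.mp h2
  exact this

lemma hasDerivAt_comp_proj {f : ℝ → C3} {f' : C3} {t : ℝ} (hf : HasDerivAt f f' t) (j : Fin 3) :
    HasDerivAt (fun t => f t j) (f' j) t := by
  exact
    ((EuclideanSpace.proj j : C3 →L[ℂ] ℂ).restrictScalars ℝ).hasFDerivAt.comp_hasDerivAt t hf

lemma hasDerivAt_normSq_comp {z : ℝ → ℂ} {z' : ℂ} {t : ℝ} (h : HasDerivAt z z' t) :
    HasDerivAt (fun t => Complex.normSq (z t)) (2 * (z' * conj (z t)).re) t := by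
  have hre : HasDerivAt (fun t => (z t).re) z'.re t := by
    exact Complex.reCLM.hasFDerivAt.comp_hasDerivAt t h
  have him : HasDerivAt (fun t => (z t).im) z'.im t := by
    exact Complex.imCLM.hasFDerivAt.comp_hasDerivAt t h
  have hd := (hre.mul hre).add (him.mul him)
  simp only [Complex.normSq_apply]
  convert hd using 1
  · rfl
  · rfl
  · rfl
  simp only [Complex.mul_re, Complex.conj_re, Complex.conj_im]
  ring

lemma norm_sq_eq_sum (x : C3) : ‖x‖^2 = ∑ j, Complex.normSq (x j) := by
  rw [EuclideanSpace.norm_eq, Real.sq_sqrt (Finset.sum_nonneg fun j _ => sq_nonneg _)]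
  refine Finset.sum_congr rfl fun j _ => ?_
  rw [← Complex.sq_norm]


/-- a solution of the Galerkin system of the inviscid Leray-α model on the modes
`Γ_N`, satisfying the incompressibility and reality constraints, conserves the energy
`∑_{k ∈ Γ_N} ‖v_k(t)‖²`. -/
theorem galerkin_energy_conservation (α : ℝ) (hα : 0 ≤ α) (N : ℕ) (v : Z3 → ℝ → C3)
    (hdiff : ∀ t : ℝ, ∀ k ∈ GammaN N,
      HasDerivAt (v k)
        ((-Complex.I) • ∑ h ∈ (GammaN N).filter (fun h => k - h ∈ GammaN N),
          (hinner (v h t) (latC k) / ((1 + α * nsq h : ℝ) : ℂ)) • Pk k (v (k - h) t)) t)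
    (hinc : ∀ t : ℝ, ∀ k ∈ GammaN N, hinner (v k t) (latC k) = 0)
    (hreal : ∀ t : ℝ, ∀ k ∈ GammaN N, v (-k) t = conjC3 (v k t)) :
    ∀ t s : ℝ, ∑ k ∈ GammaN N, ‖v k t‖ ^ 2 = ∑ k ∈ GammaN N, ‖v k s‖ ^ 2 := by
  have hD : ∀ τ : ℝ, ∀ k ∈ GammaN N, HasDerivAt (v k) (Dfun α N v k τ) τ := hdiff
  have hE : ∀ τ : ℝ, HasDerivAt (fun σ => ∑ k ∈ GammaN N, ‖v k σ‖ ^ 2) 0 τ := by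
    intro τ
    have h2 : HasDerivAt (fun σ => ∑ k ∈ GammaN N, ∑ j, Complex.normSq (v k σ j))
        (∑ k ∈ GammaN N, ∑ j, 2 * ((Dfun α N v k τ) j * conj (v k τ j)).re) τ :=
      HasDerivAt.fun_sum fun k hk =>
        HasDerivAt.fun_sum fun j _ => hasDerivAt_normSq_comp (hasDerivAt_comp_proj (hD τ k hk) j)
    have hfun : (fun σ => ∑ k ∈ GammaN N, ‖v k σ‖ ^ 2)
        = fun σ => ∑ k ∈ GammaN N, ∑ j, Complex.normSq (v k σ j) := by
      funext σ; exact Finset.sum_congr rfl fun k _ => norm_sq_eq_sum _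
    have hval : ∑ k ∈ GammaN N, ∑ j, 2 * ((Dfun α N v k τ) j * conj (v k τ j)).re = 0 := by
      have hk0 := key_sum α N v τ (hinc τ) (hreal τ)
      have : ∑ k ∈ GammaN N, ∑ j, 2 * ((Dfun α N v k τ) j * conj (v k τ j)).re
          = 2 * (∑ k ∈ GammaN N, hinner (Dfun α N v k τ) (v k τ)).re := by
        rw [Complex.re_sum, Finset.mul_sum]
        refine Finset.sum_congr rfl fun k _ => ?_
        rw [hinner, Complex.re_sum, Finset.mul_sum]
      rw [this, hk0]
      simp
    rw [hfun, ← hval]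
    exact h2
  intro t s
  exact is_const_of_deriv_eq_zero (fun τ => (hE τ).differentiableAt)
    (fun τ => (hE τ).deriv) t s
end
end

section
/- Let α ≥ 0, T > 0, E ≥ 0, and let v_k : [0,T] → ℂ³ (k ∈ ℤ³, with v_0 ≡ 0) be measurable functions such that Σ_{k∈ℤ³} ‖v_k(t)‖² ≤ E for every t ∈ [0,T], and such that each v_k with k ≠ 0 satisfies the integral equation v_k(t) = v_k(0) − i ∫₀ᵗ Σ_{h∈ℤ³} (⟨v_h(s),k⟩/(1+α‖h‖²)) P_k(v_{k−h}(s)) ds for all t ∈ [0,T]. Then for each nonzero k and all s, t ∈ [0,T]: ‖v_k(t) − v_k(s)‖ ≤ E ‖k‖ |t − s|; in particular each Fourier component v_k is Lipschitz continuous with constant E‖k‖. -/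
open scoped BigOperators ComplexConjugate

noncomputable section

instance : MeasurableSpace C3 := borel C3
instance : BorelSpace C3 := ⟨rfl⟩

lemma hinner_eq (x y : C3) : hinner x y = inner (𝕜 := ℂ) y x := by
  simp [hinner, PiLp.inner_apply, RCLike.inner_apply, mul_comm]

lemma norm_latC (k : Z3) : ‖latC k‖ = znorm k := by
  rw [EuclideanSpace.norm_eq, znorm, nsq]
  congr 1
  apply Finset.sum_congr rfl
  intro j _
  simp [latC, Complex.norm_real, sq_abs]

lemma latC_ne_zero {k : Z3} (hk : k ≠ 0) : latC k ≠ 0 := by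
  intro h
  apply hk
  funext j
  have := congrArg (fun x : C3 => x j) h
  simpa [latC] using this

lemma hinner_norm_le (x y : C3) : ‖hinner x y‖ ≤ ‖x‖ * ‖y‖ := by
  rw [hinner_eq]
  exact (norm_inner_le_norm y x).trans_eq (mul_comm _ _)

lemma norm_Pk_le {k : Z3} (hk : k ≠ 0) (w : C3) : ‖Pk k w‖ ≤ ‖w‖ := by
  set K := latC k with hK
  have hKne : K ≠ 0 := latC_ne_zero hk
  have hKK : inner (𝕜 := ℂ) K K ≠ 0 := inner_self_ne_zero.mpr hKne
  set c : ℂ := hinner w K / hinner K K with hc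
  have hPk : Pk k w = w - c • K := rfl
  have horth : inner (𝕜 := ℂ) K (Pk k w) = 0 := by
    rw [hPk, inner_sub_right, inner_smul_right, hc, hinner_eq w K, hinner_eq K K,
      div_mul_cancel₀ _ hKK, sub_self]
  have horth2 : (inner (𝕜 := ℂ) (Pk k w) (c • K) : ℂ) = 0 := by
    rw [inner_smul_right, ← inner_conj_symm, horth, map_zero, mul_zero]
  have hdecomp : w = Pk k w + c • K := by
    rw [hPk]; abel
  have hsq : ‖w‖^2 = ‖Pk k w‖^2 + ‖c • K‖^2 := by
    calc ‖w‖^2 = ‖Pk k w + c • K‖^2 := by rw [← hdecomp]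
    _ = ‖Pk k w‖^2 + 2 * Complex.re (inner (𝕜 := ℂ) (Pk k w) (c • K)) + ‖c • K‖^2 :=
      norm_add_sq (𝕜 := ℂ) _ _
    _ = ‖Pk k w‖^2 + ‖c • K‖^2 := by rw [horth2]; simp
  nlinarith [norm_nonneg (Pk k w), norm_nonneg w, norm_nonneg (c • K)]


/-- any family of measurable Fourier components of uniformly bounded energy `E`
solving the integral form of the inviscid Leray-α model on `[0,T]` has each component `v_k`
Lipschitz continuous with constant `E‖k‖`. -/
theorem components_lipschitz (α : ℝ) (hα : 0 ≤ α) (T : ℝ) (hT : 0 < T) (E : ℝ) (hE : 0 ≤ E)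
    (v : Z3 → ℝ → C3)
    (hmeas : ∀ k : Z3, Measurable (v k))
    (hzero : ∀ t ∈ Set.Icc (0:ℝ) T, v 0 t = 0)
    (henergy : ∀ t ∈ Set.Icc (0:ℝ) T,
      Summable (fun k : Z3 => ‖v k t‖ ^ 2) ∧ ∑' k : Z3, ‖v k t‖ ^ 2 ≤ E)
    (heq : ∀ k : Z3, k ≠ 0 → ∀ t ∈ Set.Icc (0:ℝ) T,
      v k t = v k 0 - Complex.I • ∫ s in (0:ℝ)..t,
        ∑' h : Z3, (hinner (v h s) (latC k) / ((1 + α * nsq h : ℝ) : ℂ)) • Pk k (v (k - h) s)) :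
    ∀ k : Z3, k ≠ 0 → ∀ s ∈ Set.Icc (0:ℝ) T, ∀ t ∈ Set.Icc (0:ℝ) T,
      ‖v k t - v k s‖ ≤ E * znorm k * |t - s| := by
  intro k hk s hs t ht
  set w : Z3 → ℝ → C3 := fun h u => if u ∈ Set.Icc (0:ℝ) T then v h u else 0 with hw
  have hwmeas : ∀ h, Measurable (w h) :=
    fun h => Measurable.ite measurableSet_Icc (hmeas h) measurable_const
  set G : Z3 → ℝ → C3 := fun h u =>
    (hinner (w h u) (latC k) / ((1 + α * nsq h : ℝ) : ℂ)) • Pk k (w (k - h) u) with hG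
  set F : ℝ → C3 := fun u => ∑' h, G h u with hF
  have hnsq : ∀ h : Z3, (0:ℝ) ≤ nsq h := fun h => Finset.sum_nonneg (fun j _ => sq_nonneg _)
  have hzk : 0 ≤ znorm k := Real.sqrt_nonneg _
  have hden : ∀ h : Z3, (1:ℝ) ≤ ‖((1 + α * nsq h : ℝ) : ℂ)‖ := by
    intro h
    rw [Complex.norm_real, Real.norm_eq_abs, abs_of_nonneg (by nlinarith [hnsq h])]
    nlinarith [hnsq h]
  have hGbound : ∀ h u, ‖G h u‖ ≤ znorm k * (‖w h u‖ * ‖w (k - h) u‖) := by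
    intro h u
    rw [hG]
    rw [norm_smul, norm_div]
    calc ‖hinner (w h u) (latC k)‖ / ‖((1 + α * nsq h : ℝ) : ℂ)‖ * ‖Pk k (w (k - h) u)‖
        ≤ ‖hinner (w h u) (latC k)‖ * ‖Pk k (w (k - h) u)‖ := by
          apply mul_le_mul_of_nonneg_right _ (norm_nonneg _)
          exact div_le_self (norm_nonneg _) (hden h)
      _ ≤ (‖w h u‖ * znorm k) * ‖w (k - h) u‖ := by
          apply mul_le_mul _ (norm_Pk_le hk _) (norm_nonneg _)
            (by positivity)
          calc ‖hinner (w h u) (latC k)‖ ≤ ‖w h u‖ * ‖latC k‖ := hinner_norm_le _ _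
            _ = ‖w h u‖ * znorm k := by rw [norm_latC]
      _ = znorm k * (‖w h u‖ * ‖w (k - h) u‖) := by ring
  have hwenergy : ∀ u, Summable (fun h : Z3 => ‖w h u‖^2) ∧ ∑' h : Z3, ‖w h u‖^2 ≤ E := by
    intro u
    by_cases hu : u ∈ Set.Icc (0:ℝ) T
    · simpa only [hw, if_pos hu] using henergy u hu
    · simp only [hw, if_neg hu]
      refine ⟨by simpa using summable_zero, ?_⟩
      simpa using hE
  have hsum2 : ∀ u, Summable (fun h : Z3 => ‖w (k - h) u‖^2) ∧ ∑' h : Z3, ‖w (k - h) u‖^2 ≤ E := by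
    intro u
    have he := hwenergy u
    have hcomp : (fun h : Z3 => ‖w h u‖^2) ∘ (Equiv.subLeft k) = fun h : Z3 => ‖w (k - h) u‖^2 := by
      funext h; simp [Equiv.subLeft]
    constructor
    · have := ((Equiv.subLeft k).summable_iff
        (f := fun h : Z3 => ‖w h u‖^2)).mpr he.1
      rwa [hcomp] at this
    · have heqt := (Equiv.subLeft k).tsum_eq (fun h : Z3 => ‖w h u‖^2)
      simp only [Equiv.subLeft_apply] at heqt
      rw [heqt]; exact he.2
  have hgsummable : ∀ u, Summable (fun h : Z3 => znorm k * ((‖w h u‖^2 + ‖w (k - h) u‖^2)/2)) :=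
    fun u => (((hwenergy u).1.add (hsum2 u).1).div_const 2).mul_left _
  have hprod_le : ∀ u h, znorm k * (‖w h u‖ * ‖w (k - h) u‖)
      ≤ znorm k * ((‖w h u‖^2 + ‖w (k - h) u‖^2)/2) := by
    intro u h
    apply mul_le_mul_of_nonneg_left _ hzk
    nlinarith [sq_nonneg (‖w h u‖ - ‖w (k - h) u‖)]
  have hGle : ∀ u h, ‖G h u‖ ≤ znorm k * ((‖w h u‖^2 + ‖w (k - h) u‖^2)/2) :=
    fun u h => (hGbound h u).trans (hprod_le u h)
  have hGsummable : ∀ u, Summable (fun h => G h u) :=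
    fun u => Summable.of_norm_bounded (hgsummable u) (hGle u)
  have hFbound : ∀ u, ‖F u‖ ≤ E * znorm k := by
    intro u
    have hsn : Summable (fun h => ‖G h u‖) :=
      Summable.of_nonneg_of_le (fun _ => norm_nonneg _) (hGle u) (hgsummable u)
    calc ‖F u‖ ≤ ∑' h, ‖G h u‖ := norm_tsum_le_tsum_norm hsn
      _ ≤ ∑' h, znorm k * ((‖w h u‖^2 + ‖w (k - h) u‖^2)/2) :=
          Summable.tsum_le_tsum (hGle u) hsn (hgsummable u)
      _ = znorm k * ((∑' h : Z3, ‖w h u‖^2 + ∑' h : Z3, ‖w (k - h) u‖^2)/2) := by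
          rw [tsum_mul_left, tsum_div_const, Summable.tsum_add (hwenergy u).1 (hsum2 u).1]
      _ ≤ znorm k * ((E + E)/2) := by
          apply mul_le_mul_of_nonneg_left _ hzk
          apply div_le_div_of_nonneg_right ?_ (by norm_num)
          exact add_le_add (hwenergy u).2 (hsum2 u).2
      _ = E * znorm k := by ring
  have hcoord : ∀ (j : Fin 3), Continuous (fun x : C3 => x j) := by
    intro j
    exact (continuous_apply j).comp (PiLp.continuous_ofLp (p := 2) (β := fun _ : Fin 3 => ℂ))
  have hinner_cont : ∀ y : C3, Continuous (fun x : C3 => hinner x y) := by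
    intro y
    unfold hinner
    apply continuous_finset_sum
    intro j _
    exact ((hcoord j).mul continuous_const)
  have hPk_cont : Continuous (Pk k) := by
    unfold Pk
    exact continuous_id.sub ((((hinner_cont (latC k)).div_const _).smul continuous_const))
  have hGmeas : ∀ h, Measurable (G h) := by
    intro h
    refine Measurable.smul (f := fun u => hinner (w h u) (latC k) / ((1 + α * nsq h : ℝ) : ℂ))
      (g := fun u => Pk k (w (k - h) u)) ?_ ?_
    · exact (((hinner_cont (latC k)).measurable).comp (hwmeas h)).div_const _
    · exact hPk_cont.measurable.comp (hwmeas (k - h))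
  have hFmeas : Measurable F := by
    apply measurable_of_tendsto_metrizable' (Filter.atTop : Filter (Finset Z3))
      (f := fun s : Finset Z3 => fun u => ∑ h ∈ s, G h u)
      (fun s : Finset Z3 => s.measurable_sum (fun h _ => hGmeas h))
    rw [tendsto_pi_nhds]
    intro u
    exact (hGsummable u).hasSum
  have hFint : ∀ a b : ℝ, IntervalIntegrable F MeasureTheory.volume a b := by
    intro a b
    rw [intervalIntegrable_iff]
    apply MeasureTheory.Integrable.mono'
      (g := fun _ => E * znorm k)
      (MeasureTheory.integrableOn_const measure_Ioc_lt_top.ne)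
      hFmeas.aestronglyMeasurable.restrict
    exact MeasureTheory.ae_of_all _ hFbound
  have hrep : ∀ u ∈ Set.Icc (0:ℝ) T, v k u = v k 0 - Complex.I • ∫ x in (0:ℝ)..u, F x := by
    intro u hu
    rw [heq k hk u hu]
    have hint : (∫ x in (0:ℝ)..u,
        ∑' h : Z3, (hinner (v h x) (latC k) / ((1 + α * nsq h : ℝ) : ℂ)) • Pk k (v (k - h) x))
        = ∫ x in (0:ℝ)..u, F x := by
      apply intervalIntegral.integral_congr
      intro x hx
      have hx' : x ∈ Set.Icc (0:ℝ) T := by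
        rcases hu with ⟨h0, hT'⟩
        rw [Set.uIcc_of_le h0] at hx
        exact ⟨hx.1, hx.2.trans hT'⟩
      simp only [hF, hG, hw, if_pos hx']
    rw [hint]
  have hdiff : v k t - v k s = Complex.I • ∫ x in t..s, F x := by
    rw [hrep t ht, hrep s hs, ← intervalIntegral.integral_interval_sub_left (hFint 0 s) (hFint 0 t),
      smul_sub]
    abel
  rw [hdiff, norm_smul, Complex.norm_I, one_mul]
  calc ‖∫ x in t..s, F x‖ ≤ E * znorm k * |s - t| :=
        intervalIntegral.norm_integral_le_of_norm_le_const (fun x _ => hFbound x)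
    _ = E * znorm k * |t - s| := by rw [abs_sub_comm]
end
end
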